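/- Let X = (ℤ/2ℤ)³ and define a 4-coloured graph γ on X by setting, for distinct x, y ∈ X: γ({x,y}) = 1 if x + y = (1,0,0), γ({x,y}) = 2 if x + y = (0,1,0), γ({x,y}) = 3 if x + y = (0,0,1), and γ({x,y}) = 0 otherwise. Then Aut(γ) = { t_g : g ∈ (ℤ/2ℤ)³ }, the group of all translations t_g : x ↦ x + g of (ℤ/2ℤ)³. -/

import Mathlib

/-- `A` is precisely the automorphism group of the `k`-coloured graph `γ` on `X`. -/
def IsColGraphAutGroup {X : Type*} {k : ℕ} (γ : Sym2 X → Fin k)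
    (A : Subgroup (Equiv.Perm X)) : Prop :=
  ∀ σ : Equiv.Perm X, σ ∈ A ↔ ∀ x y : X, x ≠ y → γ s(σ x, σ y) = γ s(x, y)

/-- The regular permutation group of a finite abelian group `G`: the subgroup of
`Sym(G)` consisting of all translations `t_g : x ↦ x + g`. -/
def translations (G : Type*) [AddCommGroup G] : Subgroup (Equiv.Perm G) where
  carrier := {σ | ∃ g : G, σ = Equiv.addRight g}
  one_mem' := ⟨0, by ext x; simp⟩
  mul_mem' := by
    rintro σ τ ⟨g, rfl⟩ ⟨h, rfl⟩
    exact ⟨h + g, by ext x; simp [add_assoc]⟩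
  inv_mem' := by
    rintro σ ⟨g, rfl⟩
    exact ⟨-g, by ext x; simp⟩

/-- The 4-coloured graph on `(ℤ/2ℤ)³` colouring `{x,y}` by `1` if `x + y = (1,0,0)`,
by `2` if `x + y = (0,1,0)`, by `3` if `x + y = (0,0,1)`, and by `0` otherwise. -/
def gamma16 : Sym2 (ZMod 2 × ZMod 2 × ZMod 2) → Fin 4 :=
  Sym2.lift ⟨fun x y =>
    if x + y = ((1 : ZMod 2), (0 : ZMod 2), (0 : ZMod 2)) then 1
    else if x + y = ((0 : ZMod 2), (1 : ZMod 2), (0 : ZMod 2)) then 2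
    else if x + y = ((0 : ZMod 2), (0 : ZMod 2), (1 : ZMod 2)) then 3
    else 0,
    fun x y => by dsimp only; rw [add_comm]⟩

/-!
Translations fix `x + y`, hence every colour. Conversely, for a unit vector `e` the pair
`{x, x + e}` gets the colour of the sum `e`, and no other sum has that colour, so an
automorphism `σ` satisfies `σ (x + e) = σ x + e`. The vectors `g` with `σ (x + g) = σ x + g`
for all `x` form a subgroup; it contains the unit vectors, which generate `(ℤ/2ℤ)³`, so `σ` is
translation by `σ 0`.
-/

theorem apply_eq_apply_zero_add_of_closure_eq_top {G : Type*} [AddGroup G] {f : G → G}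
    {S : Set G} (hS : AddSubgroup.closure S = ⊤) (hf : ∀ e ∈ S, ∀ x, f (x + e) = f x + e)
    (x : G) : f x = f 0 + x := by
  let periods : AddSubgroup G :=
    { carrier := {g | ∀ y, f (y + g) = f y + g}
      zero_mem' := by simp
      add_mem' := fun ha hb y => by rw [← add_assoc, hb, ha, add_assoc]
      neg_mem' := fun ha y => by rw [eq_add_neg_iff_add_eq, ← ha, neg_add_cancel_right] }
  have hx : x ∈ periods := (AddSubgroup.closure_le periods).mpr hf (hS ▸ AddSubgroup.mem_top x)
  simpa using hx 0

def unitVectors (R : Type*) [Zero R] [One R] : Set (R × R × R) :=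
  {(1, 0, 0), (0, 1, 0), (0, 0, 1)}

theorem ZMod.closure_unitVectors (n : ℕ) : AddSubgroup.closure (unitVectors (ZMod n)) = ⊤ := by
  refine eq_top_iff.mpr fun ⟨a, b, c⟩ _ => ?_
  rw [show ((a, b, c) : ZMod n × ZMod n × ZMod n) =
      (a.cast : ℤ) • (1, 0, 0) + (b.cast : ℤ) • (0, 1, 0) + (c.cast : ℤ) • (0, 0, 1) by simp]
  refine add_mem (add_mem ?_ ?_) ?_ <;>
    exact zsmul_mem (AddSubgroup.subset_closure (by simp [unitVectors])) _

abbrev X3 := ZMod 2 × ZMod 2 × ZMod 2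

def colourOfSum (v : X3) : Fin 4 :=
  if v = (1, 0, 0) then 1 else if v = (0, 1, 0) then 2 else if v = (0, 0, 1) then 3 else 0

theorem gamma16_mk (x y : X3) : gamma16 s(x, y) = colourOfSum (x + y) := rfl

theorem eq_of_colourOfSum_eq {e : X3} (he : e ∈ unitVectors (ZMod 2)) {v : X3}
    (h : colourOfSum v = colourOfSum e) : v = e := by
  simp only [unitVectors, Set.mem_insert_iff, Set.mem_singleton_iff] at he
  revert v
  rcases he with rfl | rfl | rfl <;> decide

theorem apply_add_unitVector_of_forall_gamma16 {σ : Equiv.Perm X3}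
    (hσ : ∀ x y : X3, x ≠ y → gamma16 s(σ x, σ y) = gamma16 s(x, y))
    (e : X3) (he : e ∈ unitVectors (ZMod 2)) (x : X3) : σ (x + e) = σ x + e := by
  have hx : x + (x + e) = e := by rw [← add_assoc, CharTwo.add_self_eq_zero, zero_add]
  have he0 : e ≠ 0 := by
    simp only [unitVectors, Set.mem_insert_iff, Set.mem_singleton_iff] at he
    rcases he with rfl | rfl | rfl <;> decide
  have hne : x ≠ x + e := by simpa using he0
  have hcol := hσ x (x + e) hne
  rw [gamma16_mk, gamma16_mk, hx] at hcol
  calc σ (x + e) = σ x + (σ x + σ (x + e)) := by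
        rw [← add_assoc, CharTwo.add_self_eq_zero, zero_add]
    _ = σ x + e := by rw [eq_of_colourOfSum_eq he hcol]

theorem statement16 :
    IsColGraphAutGroup gamma16 (translations (ZMod 2 × ZMod 2 × ZMod 2)) := by
  intro σ
  constructor
  · rintro ⟨g, rfl⟩ x y -
    show gamma16 s(x + g, y + g) = gamma16 s(x, y)
    rw [gamma16_mk, gamma16_mk, add_add_add_comm, CharTwo.add_self_eq_zero, add_zero]
  · intro hσ
    refine ⟨σ 0, Equiv.ext fun x => ?_⟩
    show σ x = x + σ 0
    rw [add_comm]
    exact apply_eq_apply_zero_add_of_closure_eq_top (ZMod.closure_unitVectors 2)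
      (apply_add_unitVector_of_forall_gamma16 hσ) x
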